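/- Let Σ be an alphabet, (S, step, s₀) a labeled transition system over Σ with S a finite type, and A = (Q, q₀, δ, F) a Büchi automaton over Σ. Form the product labeled transition system with states S × Q, initial state (s₀, q₀), and a transition from (s, q) to (s', q') on letter a whenever step s a s' and δ q a q'. If there exists a finite run ρ : Fin (m+1) → S × Q of the product from (s₀, q₀) (with some labels) such that the cardinality of {i : Fin (m+1) | (ρ i).2 ∈ F} is at least Fintype.card (S × Q) + 1, then there exist an infinite word w : ℕ → Σ and an infinite run of (S, step, s₀) with label word w such that w is Büchi-accepted by A. -/
import Mathlib


/-- A finite run of length `m` (with label word `w`) of a labeled transition system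
from the initial state `s₀`. -/
def LTSFinRun {α S : Type*} (step : S → α → S → Prop) (s₀ : S) (w : ℕ → α) (m : ℕ)
    (ρ : Fin (m + 1) → S) : Prop :=
  ρ 0 = s₀ ∧ ∀ i : Fin m, step (ρ i.castSucc) (w i.val) (ρ i.succ)

/-- An infinite run (with label word `w`) of a labeled transition system from `s₀`. -/
def LTSInfRun {α S : Type*} (step : S → α → S → Prop) (s₀ : S) (w : ℕ → α)
    (π : ℕ → S) : Prop :=
  π 0 = s₀ ∧ ∀ n : ℕ, step (π n) (w n) (π (n + 1))

/-- `w` is Büchi-accepted by the automaton `(Q, q₀, δ, F)`. -/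
def BuchiAccepted {α Q : Type*} (q₀ : Q) (δ : Q → α → Q → Prop) (F : Set Q)
    (w : ℕ → α) : Prop :=
  ∃ ρ : ℕ → Q, ρ 0 = q₀ ∧ (∀ n : ℕ, δ (ρ n) (w n) (ρ (n + 1))) ∧
    {n : ℕ | ρ n ∈ F}.Infinite

/-- The product of a labeled transition system and a Büchi automaton. -/
def ProdStep {α S Q : Type*} (step : S → α → S → Prop) (δ : Q → α → Q → Prop)
    (p : S × Q) (a : α) (p' : S × Q) : Prop :=
  step p.1 a p'.1 ∧ δ p.2 a p'.2

/-- If a finite run of the product of a finite-state labeled transition system with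
a Büchi automaton visits final (second-component) states at least
`Fintype.card (S × Q) + 1` times, then the system has an infinite run whose label
word is Büchi-accepted by the automaton. -/
theorem exists_accepted_word_of_product_many_visits {α S Q : Type*}
    [Fintype S] [Fintype Q]
    (step : S → α → S → Prop) (s₀ : S)
    (q₀ : Q) (δ : Q → α → Q → Prop) (F : Set Q)
    {m : ℕ} (ρ : Fin (m + 1) → S × Q) (u : ℕ → α)
    (hρ : LTSFinRun (ProdStep step δ) (s₀, q₀) u m ρ)
    (hcard : Fintype.card (S × Q) + 1 ≤ {i : Fin (m + 1) | (ρ i).2 ∈ F}.ncard) :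
    ∃ (w : ℕ → α) (π : ℕ → S), LTSInfRun step s₀ w π ∧ BuchiAccepted q₀ δ F w := by
  classical
  set T : Set (Fin (m+1)) := {i : Fin (m + 1) | (ρ i).2 ∈ F} with hT
  have hTfin : T.Finite := Set.toFinite T
  have hcard' : (Finset.univ : Finset (S × Q)).card < hTfin.toFinset.card := by
    have h1 : T.ncard = hTfin.toFinset.card := Set.ncard_eq_toFinset_card T hTfin
    simp only [Finset.card_univ]
    omega
  obtain ⟨a, ha, b, hb, hab, heq⟩ :=
    Finset.exists_ne_map_eq_of_card_lt_of_maps_to hcard'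
      (fun x _ => Finset.mem_univ (ρ x))
  obtain ⟨i, j, hij, hiF, hρij⟩ : ∃ i j : Fin (m+1), i < j ∧ (ρ i).2 ∈ F ∧ ρ i = ρ j := by
    rcases lt_or_gt_of_ne hab with h | h
    · exact ⟨a, b, h, (hTfin.mem_toFinset.mp ha), heq⟩
    · exact ⟨b, a, h, (hTfin.mem_toFinset.mp hb), heq.symm⟩
  set I : ℕ := i.val with hI
  set J : ℕ := j.val with hJ
  have hIJ : I < J := hij
  have hJm : J ≤ m := Nat.lt_succ_iff.mp j.isLt
  set p : ℕ := J - I with hp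
  have hppos : 0 < p := by omega
  set ρN : ℕ → S × Q := fun n => ρ ⟨min n m, by omega⟩ with hρN
  have hρNi : ρN I = ρ i := by
    simp only [hρN]; congr 1; simp [Fin.ext_iff]; omega
  have hρNIJ : ρN I = ρN J := by
    simp only [hρN]
    rw [show ρ ⟨min J m, by omega⟩ = ρ j by congr 1 <;> simp [Fin.ext_iff] <;> omega,
        show ρ ⟨min I m, by omega⟩ = ρ i by congr 1 <;> simp [Fin.ext_iff] <;> omega]
    exact hρij
  have hstep : ∀ n < m, ProdStep step δ (ρN n) (u n) (ρN (n+1)) := by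
    intro n hn
    have := hρ.2 ⟨n, hn⟩
    convert this using 2 <;> simp [hρN, Fin.ext_iff, Fin.castSucc, Fin.succ] <;> try omega
  set g : ℕ → ℕ := fun n => if n < J then n else I + (n - I) % p with hg
  have hgJ : ∀ n, g n < J := by
    intro n
    simp only [hg]
    split
    · assumption
    · have := Nat.mod_lt (n - I) hppos; omega
  have hkey : ∀ n, ρN (g (n+1)) = ρN (g n + 1) := by
    intro n
    rcases lt_trichotomy (n+1) J with h | h | h
    · simp only [hg]; rw [if_pos h, if_pos (by omega)]
    · have hn : n < J := by omega
      simp only [hg]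
      rw [if_pos hn, if_neg (by omega)]
      have h3 : (n + 1 - I) % p = 0 := by
        have : n + 1 - I = p := by omega
        simp [this]
      rw [h3, show n + 1 = J from h]
      simpa using hρNIJ
    · have hn : ¬ n < J := by omega
      simp only [hg]
      rw [if_neg (by omega), if_neg hn]
      set r := (n - I) % p with hr
      have hrp : r < p := Nat.mod_lt _ hppos
      have hsucc : (n + 1 - I) % p = (r + 1) % p := by
        rw [show n + 1 - I = (n - I) + 1 by omega, hr]
        conv_lhs => rw [Nat.add_mod]
        rw [Nat.add_mod r 1 p, Nat.mod_mod_of_dvd _ (dvd_refl p)]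
      rcases Nat.lt_or_ge (r+1) p with h2 | h2
      · rw [hsucc, Nat.mod_eq_of_lt h2, ← Nat.add_assoc]
      · have h3 : r + 1 = p := by omega
        rw [hsucc, h3, Nat.mod_self]
        rw [show I + r + 1 = J by omega]
        simpa using hρNIJ
  have h0 : g 0 = 0 := by simp only [hg]; rw [if_pos (by omega)]
  have hρN0 : ρN 0 = ρ 0 := by simp only [hρN]; congr 1
  refine ⟨fun n => u (g n), fun n => (ρN (g n)).1, ⟨?_, ?_⟩,
    fun n => (ρN (g n)).2, ?_, ?_, ?_⟩
  · show (ρN (g 0)).1 = s₀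
    rw [h0, hρN0, hρ.1]
  · intro n
    show step (ρN (g n)).1 (u (g n)) (ρN (g (n+1))).1
    have hs := hstep (g n) (by have := hgJ n; omega)
    rw [← hkey n] at hs
    exact hs.1
  · show (ρN (g 0)).2 = q₀
    rw [h0, hρN0, hρ.1]
  · intro n
    show δ (ρN (g n)).2 (u (g n)) (ρN (g (n+1))).2
    have hs := hstep (g n) (by have := hgJ n; omega)
    rw [← hkey n] at hs
    exact hs.2
  · apply Set.infinite_of_injective_forall_mem (f := fun k : ℕ => I + k * p)
    · intro x y hxy
      simp only at hxy
      exact Nat.eq_of_mul_eq_mul_right hppos (by omega)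
    · intro k
      have hgk : g (I + k * p) = I := by
        simp only [hg]
        split
        · rcases Nat.eq_zero_or_pos k with hk | hk
          · simp [hk]
          · exfalso
            have h5 : p ≤ k * p := Nat.le_mul_of_pos_left p hk
            omega
        · have h4 : I + k * p - I = k * p := by omega
          rw [h4, Nat.mul_mod_left]
          omega
      show (ρN (g (I + k * p))).2 ∈ F
      rw [hgk, hρNi]
      exact hiF
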